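/- arXiv:1905.06485 — 5 statements merged into one kernel-verified Lean document; each statement's English description precedes it below -/
import Mathlib

section
/- Quadratic perturbation preserves supersolutions: Let d ≥ 1 be an integer, c > 0, and let u₂ be a viscosity supersolution of min{−(1/2)Δu + c, u − g} = 0 on ℝ^d. Then for every ε ∈ (0, 1/d), the function u₂^ε(x) := (1 − dε)·u₂(x) + cε·(Σᵢ₌₁^d xᵢ² + d³/(4c²)) is also a viscosity supersolution of min{−(1/2)Δu + c, u − g} = 0 on ℝ^d; in particular u₂^ε ≥ g on ℝ^d. -/
open Filter MeasureTheory

noncomputable def lap {d : ℕ} (φ : EuclideanSpace ℝ (Fin d) → ℝ)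
    (x : EuclideanSpace ℝ (Fin d)) : ℝ :=
  ∑ i : Fin d, iteratedFDeriv ℝ 2 φ x ![EuclideanSpace.single i 1, EuclideanSpace.single i 1]

noncomputable def gObst {d : ℕ} (x : EuclideanSpace ℝ (Fin d)) : ℝ :=
  max (⨆ i, x i) 0

def IsVSubsol {d : ℕ} (c : ℝ) (ψ : EuclideanSpace ℝ (Fin d) → ℝ)
    (Ω : Set (EuclideanSpace ℝ (Fin d))) (u : EuclideanSpace ℝ (Fin d) → ℝ) : Prop :=
  ∀ x₀ ∈ Ω, ψ x₀ < u x₀ →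
    ∀ φ : EuclideanSpace ℝ (Fin d) → ℝ, ContDiff ℝ 2 φ → φ x₀ = u x₀ →
      (∀ᶠ x in nhds x₀, u x ≤ φ x) → -(1 / 2 : ℝ) * lap φ x₀ + c ≤ 0

def IsVSupersol {d : ℕ} (c : ℝ) (ψ : EuclideanSpace ℝ (Fin d) → ℝ)
    (Ω : Set (EuclideanSpace ℝ (Fin d))) (u : EuclideanSpace ℝ (Fin d) → ℝ) : Prop :=
  (∀ x ∈ Ω, ψ x ≤ u x) ∧
  ∀ x₀ ∈ Ω, ∀ φ : EuclideanSpace ℝ (Fin d) → ℝ, ContDiff ℝ 2 φ → φ x₀ = u x₀ →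
    (∀ᶠ x in nhds x₀, φ x ≤ u x) → 0 ≤ -(1 / 2 : ℝ) * lap φ x₀ + c

def IsVSol {d : ℕ} (c : ℝ) (ψ : EuclideanSpace ℝ (Fin d) → ℝ)
    (Ω : Set (EuclideanSpace ℝ (Fin d))) (u : EuclideanSpace ℝ (Fin d) → ℝ) : Prop :=
  IsVSubsol c ψ Ω u ∧ IsVSupersol c ψ Ω u

def LinGrowth {d : ℕ} (ψ u : EuclideanSpace ℝ (Fin d) → ℝ) : Prop :=
  (∀ x, ψ x ≤ u x) ∧ ∃ C : ℝ, ∀ x, u x ≤ (∑ i, |x i|) + C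

/-! If `φ` touches `(1 - dε) u₂ + q` from below, where `q x = cε (|x|² + d³/(4c²))`, then
`(φ - q) / (1 - dε)` touches `u₂` from below; since `Δq = 2dcε`, the supersolution inequality for
`u₂` transfers exactly. The obstacle inequality reduces to `d xᵢ ≤ c xᵢ² + d²/(4c)` (AM–GM). -/

open InnerProductSpace Laplacian

theorem laplacian_norm_sq {E : Type*} [NormedAddCommGroup E] [InnerProductSpace ℝ E]
    [FiniteDimensional ℝ E] (x : E) :
    Δ (fun y : E => ‖y‖ ^ 2) x = 2 * Module.finrank ℝ E := by
  have hD : fderiv ℝ (fun y : E => ‖y‖ ^ 2) = (2 • innerSL ℝ : E →L[ℝ] E →L[ℝ] ℝ) :=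
    funext fun y => (hasStrictFDerivAt_norm_sq y).hasFDerivAt.fderiv
  have hself (v : E) : innerSL ℝ v v = ‖v‖ ^ 2 := real_inner_self_eq_norm_sq v
  simp only [laplacian_eq_iteratedFDeriv_stdOrthonormalBasis, iteratedFDeriv_two_apply, hD,
    ContinuousLinearMap.fderiv]
  simp [hself, mul_comm]

theorem lap_eq_laplacian {d : ℕ} (φ : EuclideanSpace ℝ (Fin d) → ℝ) : lap φ = Δ φ := by
  rw [laplacian_eq_iteratedFDeriv_orthonormalBasis φ (EuclideanSpace.basisFun (Fin d) ℝ)]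
  ext x
  simp [lap]

theorem lap_mul_norm_sq_add_const {d : ℕ} (b K : ℝ) (x : EuclideanSpace ℝ (Fin d)) :
    lap (fun y => b * (‖y‖ ^ 2 + K)) x = 2 * b * d := by
  have hq : ContDiff ℝ 2 (fun y : EuclideanSpace ℝ (Fin d) => ‖y‖ ^ 2) := contDiff_norm_sq ℝ
  have : (fun y : EuclideanSpace ℝ (Fin d) => b * (‖y‖ ^ 2 + K)) =
      b • ((fun y => ‖y‖ ^ 2) + fun _ => K) := rfl
  rw [lap_eq_laplacian, this,
    laplacian_smul (f := _ + fun _ => K) _ (hq.add contDiff_const).contDiffAt,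
    hq.contDiffAt.laplacian_add contDiffAt_const, laplacian_norm_sq, finrank_euclideanSpace_fin]
  simp only [laplacian_const, Pi.zero_apply, add_zero, smul_eq_mul]
  ring

theorem IsVSupersol.mul_add {d : ℕ} {c a : ℝ} {ψ ψ' u q : EuclideanSpace ℝ (Fin d) → ℝ}
    {Ω : Set (EuclideanSpace ℝ (Fin d))} (hu : IsVSupersol c ψ Ω u) (ha : 0 < a)
    (hq : ContDiff ℝ 2 q) (hlap : ∀ x ∈ Ω, lap q x ≤ 2 * c * (1 - a))
    (hobst : ∀ x ∈ Ω, ψ' x ≤ a * u x + q x) :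
    IsVSupersol c ψ' Ω (fun x => a * u x + q x) := by
  refine ⟨hobst, fun x₀ hx₀ φ hφ hφx₀ hφle => ?_⟩
  set χ := a⁻¹ • (φ - q) with hχ_def
  have hχ : ContDiff ℝ 2 χ := (hφ.sub hq).const_smul a⁻¹
  have hφχ : φ = a • χ + q := by
    rw [hχ_def, smul_smul, mul_inv_cancel₀ ha.ne', one_smul, sub_add_cancel]
  have hχx₀ : χ x₀ = u x₀ := by
    simp [hχ_def, hφx₀, inv_mul_cancel_left₀ ha.ne']
  have hχle : ∀ᶠ x in nhds x₀, χ x ≤ u x := by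
    filter_upwards [hφle] with x hx
    simp only [hχ_def, Pi.smul_apply, Pi.sub_apply, smul_eq_mul]
    rw [inv_mul_le_iff₀ ha]
    linarith
  have hχsuper := hu.2 x₀ hx₀ χ hχ hχx₀ hχle
  have hlapφ : lap φ x₀ = a * lap χ x₀ + lap q x₀ := by
    simp only [lap_eq_laplacian]
    rw [hφχ, ContDiffAt.laplacian_add (f₁ := a • χ) (hχ.const_smul a).contDiffAt hq.contDiffAt,
      laplacian_smul _ hχ.contDiffAt, smul_eq_mul]
  calc 0 ≤ a * (-(1 / 2) * lap χ x₀ + c) + (c * (1 - a) - lap q x₀ / 2) :=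
        add_nonneg (mul_nonneg ha.le hχsuper) (by linarith [hlap x₀ hx₀])
    _ = -(1 / 2) * lap φ x₀ + c := by rw [hlapφ]; ring

theorem mul_gObst_le {d : ℕ} {a M : ℝ} (x : EuclideanSpace ℝ (Fin d)) (ha : 0 ≤ a)
    (hM : 0 ≤ M) (h : ∀ i, a * x i ≤ M) : a * gObst x ≤ M := by
  rw [gObst, mul_max_of_nonneg _ _ ha, Real.mul_iSup_of_nonneg ha, mul_zero]
  exact max_le (Real.iSup_le h hM) hM

theorem natCast_mul_gObst_le {d : ℕ} {c : ℝ} (hc : 0 < c) (x : EuclideanSpace ℝ (Fin d)) :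
    d * gObst x ≤ c * (∑ i, x i ^ 2 + (d : ℝ) ^ 3 / (4 * c ^ 2)) := by
  refine mul_gObst_le x d.cast_nonneg (by positivity) fun i => ?_
  have hxi : x i ^ 2 ≤ ∑ j, x j ^ 2 :=
    Finset.single_le_sum (fun j _ => sq_nonneg (x j)) (Finset.mem_univ i)
  have hd : (d : ℝ) ^ 2 ≤ d ^ 3 := by
    rcases d.eq_zero_or_pos with rfl | hd
    · simp
    · exact pow_le_pow_right₀ (by exact_mod_cast hd) (by norm_num)
  have amgm : d * x i ≤ c * x i ^ 2 + d ^ 2 / (4 * c) := by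
    have : c * x i ^ 2 + d ^ 2 / (4 * c) - d * x i = (2 * c * x i - d) ^ 2 / (4 * c) := by
      field_simp; ring
    linarith [show 0 ≤ (2 * c * x i - d) ^ 2 / (4 * c) by positivity]
  calc (d : ℝ) * x i ≤ c * x i ^ 2 + d ^ 2 / (4 * c) := amgm
    _ ≤ c * ∑ j, x j ^ 2 + d ^ 3 / (4 * c) := by gcongr
    _ = c * (∑ j, x j ^ 2 + d ^ 3 / (4 * c ^ 2)) := by field_simp

theorem quadratic_perturbation_supersolution_general (d : ℕ) (c : ℝ) (hc : 0 < c)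
    (u₂ : EuclideanSpace ℝ (Fin d) → ℝ)
    (hu₂ : IsVSupersol c gObst Set.univ u₂)
    (ε : ℝ) (hε : ε ∈ Set.Ioo 0 (1 / (d : ℝ))) :
    IsVSupersol c gObst Set.univ
        (fun x => (1 - d * ε) * u₂ x + c * ε * ((∑ i, (x i) ^ 2) + (d : ℝ) ^ 3 / (4 * c ^ 2))) ∧
      ∀ x : EuclideanSpace ℝ (Fin d),
        gObst x ≤ (1 - d * ε) * u₂ x + c * ε * ((∑ i, (x i) ^ 2) + (d : ℝ) ^ 3 / (4 * c ^ 2)) := by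
  obtain ⟨hε0, hεd⟩ := hε
  have hd : (0 : ℝ) < d := one_div_pos.mp (hε0.trans hεd)
  have hA : 0 < 1 - d * ε := by
    rw [lt_div_iff₀ hd] at hεd
    linarith
  have hobst (x : EuclideanSpace ℝ (Fin d)) :
      gObst x ≤ (1 - d * ε) * u₂ x + c * ε * ((∑ i, (x i) ^ 2) + (d : ℝ) ^ 3 / (4 * c ^ 2)) :=
    calc gObst x = (1 - d * ε) * gObst x + ε * (d * gObst x) := by ring
      _ ≤ (1 - d * ε) * u₂ x + ε * (c * ((∑ i, (x i) ^ 2) + (d : ℝ) ^ 3 / (4 * c ^ 2))) :=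
        add_le_add (mul_le_mul_of_nonneg_left (hu₂.1 x trivial) hA.le)
          (mul_le_mul_of_nonneg_left (natCast_mul_gObst_le hc x) hε0.le)
      _ = _ := by ring
  have hsum (x : EuclideanSpace ℝ (Fin d)) : ∑ i, x i ^ 2 = ‖x‖ ^ 2 := by
    simp [EuclideanSpace.norm_sq_eq]
  refine ⟨hu₂.mul_add hA ?_ (fun x _ => ?_) (fun x _ => hobst x), hobst⟩
  · simp_rw [hsum]
    exact contDiff_const.mul ((contDiff_norm_sq ℝ).add contDiff_const)
  · simp_rw [hsum]
    rw [lap_mul_norm_sq_add_const]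
    linarith

/-- Quadratic perturbation preserves supersolutions. -/
theorem quadratic_perturbation_supersolution (d : ℕ) (hd : 1 ≤ d) (c : ℝ) (hc : 0 < c)
    (u₂ : EuclideanSpace ℝ (Fin d) → ℝ) (hu₂cont : Continuous u₂)
    (hu₂ : IsVSupersol c gObst Set.univ u₂)
    (ε : ℝ) (hε : ε ∈ Set.Ioo 0 (1 / (d : ℝ))) :
    IsVSupersol c gObst Set.univ
        (fun x => (1 - d * ε) * u₂ x + c * ε * ((∑ i, (x i) ^ 2) + (d : ℝ) ^ 3 / (4 * c ^ 2))) ∧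
      ∀ x : EuclideanSpace ℝ (Fin d),
        gObst x ≤ (1 - d * ε) * u₂ x + c * ε * ((∑ i, (x i) ^ 2) + (d : ℝ) ^ 3 / (4 * c ^ 2)) :=
  quadratic_perturbation_supersolution_general d c hc u₂ hu₂ ε hε
end

section
/- Rescaling produces a subsolution: Let d ≥ 1 be an integer, c > 0, and let u be a viscosity solution of min{−(1/2)Δu + c, u − g} = 0 on ℝ^d. Then for every t ≥ 1, the function v(x) := u(tx)/t is a viscosity subsolution of min{−(1/2)Δv + c, v − g} = 0 on ℝ^d. -/
open Filter MeasureTheory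

/-!
If `φ` touches `u (t • ·) / t` from above at `x₀`, then `y ↦ t * φ (t⁻¹ • y)` touches `u` from
above at `t • x₀`, where `u` still lies strictly above the positively homogeneous obstacle. Its
Laplacian there is `t⁻¹ * Δφ x₀`, so the subsolution property of `u` gives `Δφ x₀ ≥ 2 c t ≥ 2 c`.
-/

open Topology

section Laplacian

variable {d : ℕ} {φ : EuclideanSpace ℝ (Fin d) → ℝ}

theorem lap_const_mul (hφ : ContDiff ℝ 2 φ) (a : ℝ) (x : EuclideanSpace ℝ (Fin d)) :
    lap (fun y => a * φ y) x = a * lap φ x := by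
  simp only [lap, ← smul_eq_mul (a := a), iteratedFDeriv_const_smul_apply' hφ.contDiffAt,
    smul_apply, Finset.smul_sum]

theorem lap_comp_smul (hφ : ContDiff ℝ 2 φ) (s : ℝ) (x : EuclideanSpace ℝ (Fin d)) :
    lap (fun y => φ (s • y)) x = s ^ 2 * lap φ (s • x) := by
  let L : EuclideanSpace ℝ (Fin d) →L[ℝ] EuclideanSpace ℝ (Fin d) :=
    s • ContinuousLinearMap.id ℝ _
  have hL : (fun y => φ (s • y)) = φ ∘ L := rfl
  simp only [lap, Finset.mul_sum, hL, L.iteratedFDeriv_comp_right hφ x le_rfl,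
    ContinuousMultilinearMap.compContinuousLinearMap_apply]
  refine Finset.sum_congr rfl fun i _ => ?_
  have hLe : (fun j => L (![EuclideanSpace.single i (1 : ℝ), EuclideanSpace.single i 1] j)) =
      fun j => s • ![EuclideanSpace.single i (1 : ℝ), EuclideanSpace.single i 1] j := rfl
  rw [hLe, ContinuousMultilinearMap.map_smul_univ]
  simp [sq, L]

end Laplacian

theorem gObst_smul {d : ℕ} {t : ℝ} (ht : 0 ≤ t) (x : EuclideanSpace ℝ (Fin d)) :
    gObst (t • x) = t * gObst x := by
  simp only [gObst, Real.mul_iSup_of_nonneg ht, mul_max_of_nonneg _ _ ht, mul_zero,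
    PiLp.smul_apply, smul_eq_mul]

theorem IsVSubsol.comp_smul_div {d : ℕ} {c t : ℝ} {ψ u : EuclideanSpace ℝ (Fin d) → ℝ}
    {Ω : Set (EuclideanSpace ℝ (Fin d))} (hψ : ∀ x, ψ (t • x) = t * ψ x) (hc : 0 ≤ c)
    (ht : 1 ≤ t) (hu : IsVSubsol c ψ Ω u) :
    IsVSubsol c ψ ((t • ·) ⁻¹' Ω) (fun x => u (t • x) / t) := by
  intro x₀ hx₀ hψx₀ φ hφ hφx₀ hφu
  have ht0 : 0 < t := one_pos.trans_le ht
  set φt : EuclideanSpace ℝ (Fin d) → ℝ := fun y => t * φ (t⁻¹ • y) with hφt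
  have hφt_smooth : ContDiff ℝ 2 φt := contDiff_const.mul (hφ.comp (contDiff_const_smul t⁻¹))
  have hφt_at : φt (t • x₀) = u (t • x₀) := by
    simp only [hφt, inv_smul_smul₀ ht0.ne', hφx₀]
    field_simp
  have hφt_above : ∀ᶠ y in 𝓝 (t • x₀), u y ≤ φt y := by
    have hlim : Tendsto (t⁻¹ • ·) (𝓝 (t • x₀)) (𝓝 x₀) := by
      simpa [inv_smul_smul₀ ht0.ne'] using (continuous_const_smul t⁻¹).tendsto (t • x₀)
    filter_upwards [hlim.eventually hφu] with y hy
    rwa [smul_inv_smul₀ ht0.ne', div_le_iff₀' ht0] at hy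
  have hobst : ψ (t • x₀) < u (t • x₀) := by
    rwa [hψ, ← lt_div_iff₀' ht0]
  have hlap : lap φt (t • x₀) = t⁻¹ * lap φ x₀ := by
    rw [hφt, lap_const_mul (φ := fun y => φ (t⁻¹ • y)) (hφ.comp (contDiff_const_smul t⁻¹)),
      lap_comp_smul hφ, inv_smul_smul₀ ht0.ne']
    field_simp
  have hsub := hu (t • x₀) hx₀ hobst φt hφt_smooth hφt_at hφt_above
  have h2c : 2 * c ≤ lap φ x₀ / t := by
    rw [hlap] at hsub
    rw [div_eq_inv_mul]
    linarith
  have hlap_ge : 2 * c ≤ lap φ x₀ := calc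
    2 * c ≤ 2 * c * t := le_mul_of_one_le_right (by positivity) ht
    _ ≤ lap φ x₀ := (le_div_iff₀ ht0).1 h2c
  linarith

theorem rescaling_subsolution_general (d : ℕ) (c : ℝ) (hc : 0 < c)
    (u : EuclideanSpace ℝ (Fin d) → ℝ)
    (hu : IsVSol c gObst Set.univ u) (t : ℝ) (ht : 1 ≤ t) :
    IsVSubsol c gObst Set.univ (fun x => u (t • x) / t) := by
  have hobst : ∀ x : EuclideanSpace ℝ (Fin d), gObst (t • x) = t * gObst x :=
    gObst_smul (zero_le_one.trans ht)
  simpa only [Set.preimage_univ] using hu.1.comp_smul_div hobst hc.le ht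

/-- Rescaling produces a subsolution. -/
theorem rescaling_subsolution (d : ℕ) (hd : 1 ≤ d) (c : ℝ) (hc : 0 < c)
    (u : EuclideanSpace ℝ (Fin d) → ℝ) (hucont : Continuous u)
    (hu : IsVSol c gObst Set.univ u) (t : ℝ) (ht : 1 ≤ t) :
    IsVSubsol c gObst Set.univ (fun x => u (t • x) / t) :=
  rescaling_subsolution_general d c hc u hu t ht
end

section
/- Explicit solution of the two-dimensional auxiliary obstacle problem: Let c > 0. The function η_c : ℝ² → ℝ is continuously differentiable on ℝ² and is a viscosity solution of min{−(1/2)Δη + c, η − ρ} = 0 on ℝ², where ρ(t, s) = (t + |s|)/√2. -/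
open Filter MeasureTheory

noncomputable def eta (θ : ℝ) (x : EuclideanSpace ℝ (Fin 2)) : ℝ :=
  if |x 1| ≤ 1 / (2 * Real.sqrt 2 * θ) then
    x 0 / Real.sqrt 2 + θ * (x 1) ^ 2 + 1 / (8 * θ)
  else (x 0 + |x 1|) / Real.sqrt 2

noncomputable def rhoObst2 (x : EuclideanSpace ℝ (Fin 2)) : ℝ :=
  (x 0 + |x 1|) / Real.sqrt 2

open Topology

/-! With `a = etaWidth c = 1 / (2√2 c)` and `Q(t, s) = etaQuad c (t, s) = t/√2 + c s² + 1/(8c)`,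
the identity `c (s - a)² = c s² + 1/(8c) - s/√2` gives
`η = ρ + c ((a - |s|)⁺)² = Q - c (((s - a)⁺)² + ((-s - a)⁺)²)`.
The first form shows `ρ ≤ η` with equality exactly for `|s| ≥ a`; the second shows `η ≤ Q`
and, since `u ↦ (u⁺)²` is `C¹`, that `η` is `C¹`.

The viscosity inequalities reduce to comparing Laplacians of `C²` functions touching at a
point: if `u ≤ v` near `x` with `u x = v x`, then `Δu(x) ≤ Δv(x)`, by the second-derivative
test along coordinate lines. Where `η > ρ`, `η` agrees with `Q` near the point and `ΔQ = 2c`;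
where `η = ρ`, `η` is touched from above by `Q` (if `|s| ≤ a`) or is locally affine. -/

theorem iteratedFDeriv_two_apply_eq_deriv_deriv {E F : Type*} [NormedAddCommGroup E]
    [NormedSpace ℝ E] [NormedAddCommGroup F] [NormedSpace ℝ F] {f : E → F}
    (hf : ContDiff ℝ 2 f) (x v : E) :
    iteratedFDeriv ℝ 2 f x ![v, v] = deriv (deriv fun r : ℝ => f (x + r • v)) 0 := by
  set L : ℝ →L[ℝ] E := (1 : ℝ →L[ℝ] ℝ).smulRight v
  have hline : (fun r : ℝ => f (x + r • v)) = (fun z => f (x + z)) ∘ L := by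
    ext r; simp [L]
  have hshift : ContDiff ℝ 2 fun z => f (x + z) := hf.comp (contDiff_const.add contDiff_id)
  have hvv : ![v, v] = fun _ => L 1 := by ext i; fin_cases i <;> simp [L]
  have h2 : deriv (deriv fun r : ℝ => f (x + r • v)) =
      iteratedDeriv 2 fun r : ℝ => f (x + r • v) := by
    rw [iteratedDeriv_succ, iteratedDeriv_one]
  rw [h2, hline, iteratedDeriv_eq_iteratedFDeriv, L.iteratedFDeriv_comp_right hshift _ le_rfl,
    iteratedFDeriv_comp_add_left, hvv]
  simp

theorem IsLocalMin.deriv_deriv_nonneg {f : ℝ → ℝ} {x₀ : ℝ} (hmin : IsLocalMin f x₀)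
    (hc : ContinuousAt f x₀) : 0 ≤ deriv (deriv f) x₀ := by
  by_contra! hneg
  have hmax := isLocalMax_of_deriv_deriv_neg hneg hmin.deriv_eq_zero hc
  have hconst : f =ᶠ[𝓝 x₀] fun _ => f x₀ :=
    (hmin.and hmax).mono fun x hx => le_antisymm hx.2 hx.1
  have hzero : deriv (deriv f) x₀ = 0 := by simpa using hconst.deriv.deriv_eq
  linarith

theorem IsLocalMin.iteratedFDeriv_two_nonneg {E : Type*} [NormedAddCommGroup E]
    [NormedSpace ℝ E] {f : E → ℝ} {x : E} (hf : ContDiff ℝ 2 f) (hmin : IsLocalMin f x)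
    (v : E) :
    0 ≤ iteratedFDeriv ℝ 2 f x ![v, v] := by
  have hline : Continuous fun r : ℝ => x + r • v := by fun_prop
  rw [iteratedFDeriv_two_apply_eq_deriv_deriv hf]
  refine IsLocalMin.deriv_deriv_nonneg ?_ (hf.continuous.comp hline).continuousAt
  exact IsLocalMin.comp_continuous (by simpa using hmin) hline.continuousAt

theorem lap_sub {d : ℕ} {u v : EuclideanSpace ℝ (Fin d) → ℝ} (hu : ContDiff ℝ 2 u)
    (hv : ContDiff ℝ 2 v) (x : EuclideanSpace ℝ (Fin d)) :
    lap (u - v) x = lap u x - lap v x := by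
  simp only [lap, iteratedFDeriv_sub_apply hu.contDiffAt hv.contDiffAt, sub_apply,
    Finset.sum_sub_distrib]

theorem lap_le_lap_of_eventually_le {d : ℕ} {u v : EuclideanSpace ℝ (Fin d) → ℝ}
    {x : EuclideanSpace ℝ (Fin d)} (hu : ContDiff ℝ 2 u) (hv : ContDiff ℝ 2 v)
    (hle : u ≤ᶠ[𝓝 x] v) (heq : u x = v x) : lap u x ≤ lap v x := by
  have hmin : IsLocalMin (v - u) x := hle.mono fun y hy => by simp [heq, hy]
  have hsum : 0 ≤ lap (v - u) x :=
    Finset.sum_nonneg fun i _ => hmin.iteratedFDeriv_two_nonneg (hv.sub hu) _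
  rw [lap_sub hv hu] at hsum
  linarith

theorem lap_sum_comp_apply {d : ℕ} {g : Fin d → ℝ → ℝ} (hg : ∀ i, ContDiff ℝ 2 (g i))
    (x : EuclideanSpace ℝ (Fin d)) :
    lap (fun y => ∑ i, g i (y i)) x = ∑ i, deriv (deriv (g i)) (x i) := by
  have hsum : ContDiff ℝ 2 fun y : EuclideanSpace ℝ (Fin d) => ∑ i, g i (y i) :=
    ContDiff.sum fun i _ => (hg i).comp (EuclideanSpace.proj (𝕜 := ℝ) i).contDiff
  refine Finset.sum_congr rfl fun i _ => ?_
  rw [iteratedFDeriv_two_apply_eq_deriv_deriv hsum]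
  have hline : (fun r : ℝ => ∑ j, g j ((x + r • EuclideanSpace.single i (1 : ℝ)) j)) =
      fun r => g i (x i + r) + ∑ j ∈ Finset.univ.erase i, g j (x j) := by
    ext r
    rw [← Finset.add_sum_erase _ _ (Finset.mem_univ i)]
    congr 1
    · simp
    · refine Finset.sum_congr rfl fun j hj => ?_
      simp [Finset.ne_of_mem_erase hj]
  have hderiv : deriv (fun r => g i (x i + r) + ∑ j ∈ Finset.univ.erase i, g j (x j)) =
      fun r => deriv (g i) (x i + r) := by
    ext r; rw [deriv_add_const, deriv_comp_const_add]
  rw [hline, hderiv, deriv_comp_const_add, add_zero]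

theorem hasDerivAt_max_zero_sq (u : ℝ) :
    HasDerivAt (fun t : ℝ => max t 0 ^ 2) (2 * max u 0) u := by
  rcases lt_trichotomy u 0 with hu | rfl | hu
  · have hzero : (fun t : ℝ => max t 0 ^ 2) =ᶠ[𝓝 u] fun _ => 0 := by
      filter_upwards [gt_mem_nhds hu] with t ht
      simp [max_eq_right ht.le]
    simpa [max_eq_right hu.le] using (hasDerivAt_const u (0 : ℝ)).congr_of_eventuallyEq hzero
  · have hslope : ∀ t ≠ (0 : ℝ), slope (fun t : ℝ => max t 0 ^ 2) 0 t = max t 0 := by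
      intro t ht
      rcases ht.lt_or_gt with h | h
      · simp [slope_def_field, max_eq_right h.le]
      · simp only [slope_def_field, max_eq_left h.le, max_self]
        field_simp
        ring
    have hcont : Tendsto (fun t : ℝ => max t 0) (𝓝[≠] 0) (𝓝 (2 * max 0 0)) := by
      have := (continuous_id.max continuous_const).tendsto (0 : ℝ) (f := fun t : ℝ => max t 0)
      simpa using this.mono_left nhdsWithin_le_nhds
    rw [hasDerivAt_iff_tendsto_slope]
    exact hcont.congr' (eventually_nhdsWithin_of_forall fun t ht => (hslope t ht).symm)
  · have hsq : (fun t : ℝ => max t 0 ^ 2) =ᶠ[𝓝 u] fun t => t ^ 2 := by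
      filter_upwards [lt_mem_nhds hu] with t ht
      simp [max_eq_left ht.le]
    simpa [max_eq_left hu.le] using (hasDerivAt_pow 2 u).congr_of_eventuallyEq hsq

theorem contDiff_max_zero_sq : ContDiff ℝ 1 fun t : ℝ => max t 0 ^ 2 := by
  rw [contDiff_one_iff_deriv]
  refine ⟨fun u => (hasDerivAt_max_zero_sq u).differentiableAt, ?_⟩
  rw [funext fun u => (hasDerivAt_max_zero_sq u).deriv]
  fun_prop

theorem lap_add_comp_two {g h : ℝ → ℝ} (hg : ContDiff ℝ 2 g) (hh : ContDiff ℝ 2 h)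
    (x : EuclideanSpace ℝ (Fin 2)) :
    lap (fun y => g (y 0) + h (y 1)) x = deriv (deriv g) (x 0) + deriv (deriv h) (x 1) := by
  simpa [Fin.sum_univ_two] using
    lap_sum_comp_apply (g := ![g, h]) (Fin.forall_fin_two.2 ⟨hg, hh⟩) x

section Eta

variable {c : ℝ}

noncomputable def etaWidth (c : ℝ) : ℝ := 1 / (2 * Real.sqrt 2 * c)

noncomputable def etaQuad (c : ℝ) (x : EuclideanSpace ℝ (Fin 2)) : ℝ :=
  x 0 / Real.sqrt 2 + c * x 1 ^ 2 + 1 / (8 * c)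

theorem etaWidth_pos (hc : 0 < c) : 0 < etaWidth c := by
  unfold etaWidth; positivity

theorem mul_sub_etaWidth_sq (hc : c ≠ 0) (s : ℝ) :
    c * (s - etaWidth c) ^ 2 = c * s ^ 2 + 1 / (8 * c) - s / Real.sqrt 2 := by
  have h2 : Real.sqrt 2 ^ 2 = 2 := Real.sq_sqrt (by norm_num)
  have h2' : Real.sqrt 2 ≠ 0 := by positivity
  unfold etaWidth
  field_simp
  linear_combination (-4) * h2

theorem eta_eq_etaQuad {x : EuclideanSpace ℝ (Fin 2)} (hx : |x 1| ≤ etaWidth c) :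
    eta c x = etaQuad c x :=
  if_pos hx

theorem eta_eq_rhoObst2_of_etaWidth_lt {x : EuclideanSpace ℝ (Fin 2)}
    (hx : etaWidth c < |x 1|) :
    eta c x = rhoObst2 x :=
  if_neg (not_le.2 hx)

theorem eta_eq_etaQuad_sub (hc : 0 < c) (x : EuclideanSpace ℝ (Fin 2)) :
    eta c x = etaQuad c x -
      c * (max (x 1 - etaWidth c) 0 ^ 2 + max (-x 1 - etaWidth c) 0 ^ 2) := by
  have ha := etaWidth_pos hc
  by_cases hx : |x 1| ≤ etaWidth c
  · obtain ⟨h₁, h₂⟩ := abs_le.1 hx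
    rw [eta_eq_etaQuad hx, max_eq_right (by linarith), max_eq_right (by linarith)]
    ring
  · rw [eta_eq_rhoObst2_of_etaWidth_lt (not_le.1 hx), rhoObst2, etaQuad]
    rcases le_or_gt 0 (x 1) with hs | hs
    · rw [abs_of_nonneg hs] at hx ⊢
      rw [max_eq_left (by linarith), max_eq_right (by linarith)]
      linear_combination mul_sub_etaWidth_sq hc.ne' (x 1)
    · rw [abs_of_neg hs] at hx ⊢
      rw [max_eq_right (by linarith), max_eq_left (by linarith)]
      linear_combination mul_sub_etaWidth_sq hc.ne' (-x 1)

theorem eta_eq_rhoObst2_add (hc : 0 < c) (x : EuclideanSpace ℝ (Fin 2)) :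
    eta c x = rhoObst2 x + c * max (etaWidth c - |x 1|) 0 ^ 2 := by
  by_cases hx : |x 1| ≤ etaWidth c
  · rw [eta_eq_etaQuad hx, max_eq_left (by linarith), ← neg_sub, neg_sq,
      mul_sub_etaWidth_sq hc.ne', sq_abs, etaQuad, rhoObst2]
    ring
  · rw [eta_eq_rhoObst2_of_etaWidth_lt (not_le.1 hx), max_eq_right (by linarith)]
    ring

theorem rhoObst2_le_eta (hc : 0 < c) (x : EuclideanSpace ℝ (Fin 2)) :
    rhoObst2 x ≤ eta c x := by
  rw [eta_eq_rhoObst2_add hc]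
  have := mul_nonneg hc.le (sq_nonneg (max (etaWidth c - |x 1|) 0))
  linarith

theorem abs_lt_etaWidth_of_rhoObst2_lt_eta (hc : 0 < c) {x : EuclideanSpace ℝ (Fin 2)}
    (hx : rhoObst2 x < eta c x) : |x 1| < etaWidth c := by
  by_contra! h
  rw [eta_eq_rhoObst2_add hc, max_eq_right (by linarith)] at hx
  simp at hx

theorem eta_le_etaQuad (hc : 0 < c) (x : EuclideanSpace ℝ (Fin 2)) : eta c x ≤ etaQuad c x := by
  rw [eta_eq_etaQuad_sub hc]
  have := mul_nonneg hc.le (add_nonneg (sq_nonneg (max (x 1 - etaWidth c) 0))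
    (sq_nonneg (max (-x 1 - etaWidth c) 0)))
  linarith

theorem contDiff_etaQuad (c : ℝ) : ContDiff ℝ 2 (etaQuad c) := by
  unfold etaQuad; fun_prop

theorem lap_etaQuad (c : ℝ) (x : EuclideanSpace ℝ (Fin 2)) : lap (etaQuad c) x = 2 * c := by
  have hsplit : etaQuad c = fun y => y 0 / Real.sqrt 2 + (c * y 1 ^ 2 + 1 / (8 * c)) := by
    ext y; rw [etaQuad, add_assoc]
  rw [hsplit]
  refine (lap_add_comp_two (g := fun t => t / Real.sqrt 2)
    (h := fun s => c * s ^ 2 + 1 / (8 * c)) (by fun_prop) (by fun_prop) x).trans ?_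
  simp [div_eq_mul_inv, mul_comm]

theorem contDiff_eta (hc : 0 < c) : ContDiff ℝ 1 (eta c) := by
  rw [funext (eta_eq_etaQuad_sub hc)]
  have hsq := contDiff_max_zero_sq
  exact (contDiff_etaQuad c).of_le (by norm_num) |>.sub <| contDiff_const.mul <|
    (hsq.comp (by fun_prop)).add (hsq.comp (by fun_prop))

theorem eventually_eta_eq_affine (hc : 0 < c) {x₀ : EuclideanSpace ℝ (Fin 2)}
    (hx : etaWidth c < |x₀ 1|) :
    ∃ σ : ℝ, eta c =ᶠ[𝓝 x₀] fun y => y 0 / Real.sqrt 2 + σ * y 1 / Real.sqrt 2 := by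
  have hproj : Continuous fun y : EuclideanSpace ℝ (Fin 2) => y 1 := by fun_prop
  have ha := etaWidth_pos hc
  rcases le_or_gt 0 (x₀ 1) with hs | hs
  · rw [abs_of_nonneg hs] at hx
    refine ⟨1, ?_⟩
    filter_upwards [(isOpen_lt continuous_const hproj).mem_nhds hx] with y (hy : _ < y 1)
    rw [eta_eq_rhoObst2_of_etaWidth_lt (hy.trans_le (le_abs_self _)), rhoObst2,
      abs_of_pos (ha.trans hy)]
    ring
  · rw [abs_of_neg hs] at hx
    refine ⟨-1, ?_⟩
    filter_upwards [(isOpen_lt hproj continuous_const).mem_nhds (lt_neg.1 hx)]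
      with y (hy : y 1 < _)
    rw [eta_eq_rhoObst2_of_etaWidth_lt ((lt_neg.1 hy).trans_le (neg_le_abs _)), rhoObst2,
      abs_of_neg (hy.trans (neg_lt_zero.2 ha))]
    ring

theorem eta_isVSubsol (hc : 0 < c) : IsVSubsol c rhoObst2 Set.univ (eta c) := by
  intro x₀ _ hρ φ hφ hφx hle
  have hx := abs_lt_etaWidth_of_rhoObst2_lt_eta hc hρ
  have hquad : eta c =ᶠ[𝓝 x₀] etaQuad c := by
    have hopen : IsOpen {y : EuclideanSpace ℝ (Fin 2) | |y 1| < etaWidth c} :=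
      isOpen_lt (by fun_prop) continuous_const
    filter_upwards [hopen.mem_nhds hx] with y hy
    exact eta_eq_etaQuad hy.le
  have hlap := lap_le_lap_of_eventually_le (contDiff_etaQuad c) hφ (hquad.symm.le.trans hle)
    ((eta_eq_etaQuad hx.le).symm.trans hφx.symm)
  rw [lap_etaQuad] at hlap
  linarith

theorem eta_isVSupersol (hc : 0 < c) : IsVSupersol c rhoObst2 Set.univ (eta c) := by
  refine ⟨fun x _ => rhoObst2_le_eta hc x, fun x₀ _ φ hφ hφx hle => ?_⟩
  replace hle : φ ≤ᶠ[𝓝 x₀] eta c := hle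
  by_cases hx : |x₀ 1| ≤ etaWidth c
  · have hlap := lap_le_lap_of_eventually_le hφ (contDiff_etaQuad c)
      (hle.trans (Eventually.of_forall (eta_le_etaQuad hc))) (hφx.trans (eta_eq_etaQuad hx))
    rw [lap_etaQuad] at hlap
    linarith
  · obtain ⟨σ, hσ⟩ := eventually_eta_eq_affine hc (not_le.1 hx)
    have hlap := lap_le_lap_of_eventually_le hφ (by fun_prop) (hle.trans hσ.le)
      (hφx.trans hσ.eq_of_nhds)
    have haffine : lap (fun y => y 0 / Real.sqrt 2 + σ * y 1 / Real.sqrt 2) x₀ = 0 := by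
      rw [lap_add_comp_two (g := fun t => t / Real.sqrt 2)
        (h := fun s => σ * s / Real.sqrt 2) (by fun_prop) (by fun_prop)]
      simp [div_eq_mul_inv]
    linarith

end Eta

/-- Explicit solution of the two-dimensional auxiliary obstacle problem. -/
theorem eta_is_solution (c : ℝ) (hc : 0 < c) :
    ContDiff ℝ 1 (eta c) ∧ IsVSol c rhoObst2 Set.univ (eta c) :=
  ⟨contDiff_eta hc, eta_isVSubsol hc, eta_isVSupersol hc⟩
end

section
/- Asymptotic localization of the free boundary in dimension two: Let c > 0 and let u be a viscosity solution of min{−(1/2)Δu + c, u − g} = 0 on ℝ² with at most linear growth, where g(x₁, x₂) = max{x₁, x₂, 0}, and suppose in addition that u(x₁, x₂) ≤ max{x₁, 0} + max{x₂, 0} + 1/(4c) for all (x₁, x₂). Then: (i) for every ε ∈ (0, c) and every (x₁, x₂) with (x₁ + x₂)/√2 ≥ 1/(2√(cε)) and |x₁ − x₂| ≥ 1/(2(c − ε)), one has u(x₁, x₂) = g(x₁, x₂); (ii) for every (x₁, x₂) with x₁ + x₂ ≥ 0 and |x₁ − x₂| < 1/(2c), one has u(x₁, x₂) > g(x₁,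 x₂). Consequently, for every T > 1/(2c), setting ε = 1/(4cT²), every point (x₁, x₂) of the topological boundary of {u > g} with (x₁ + x₂)/√2 ≥ T satisfies 1/(2c) ≤ |x₁ − x₂| ≤ 1/(2(c − ε)), and hence its Euclidean distance to the set {|x₁ − x₂| = 1/(2c)} is at most ε/(2√2·c·(c − ε)). -/
open Filter

/-!
Write `p = x₀ + x₁` and `s = x₀ - x₁`. Then `Δ = 2 (∂²ₚ + ∂²ₛ)` and `g = max ((p + |s|) / 2) 0`,
so quadratic polynomials in `(p, s)` are explicit barriers. Comparison with them is a maximum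
principle on a closed unbounded set, which applies because the differences tend to `-∞`
quadratically.

(i) On the half-plane `p ≥ 0` the subsolution `u` lies below
`(p + |s|) / 2 + (|s| - s₀)² / (4 s₀) + (p - p₀)² / (4 c p₀²)` as soon as its Laplacian
`1 / s₀ + 1 / (c p₀²)` is `< 2c`: this barrier dominates `g`, and on the line `p = 0` it dominates
`|s| / 2 + 1 / (4c)`, which is where the a priori bound on `u` enters. Taking `p₀ = p` and letting
`s₀ ↓ |s|` gives `u = g` wherever `1 / |s| + 1 / (c p²) ≤ 2c`.

(ii) On the strip `|s| ≤ τ < 1 / (2c)` the supersolution `u` lies above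
`p / 2 + s² / (4τ) + τ / 4 - β (p - p₁)²`, which is `≤ g` on `|s| = τ` and has Laplacian `> 2c`
for small `β > 0`; with `p₁ = p(x)` it exceeds `g(x)` at any `x` with `|s(x)| < τ` and `p(x) ≥ 0`.

(iii) Both criteria are open conditions, so at a free-boundary point `|s| ≥ 1 / (2c)` and
`1 / |s| + 1 / (c p²) ≥ 2c`; the rest is arithmetic.
-/

theorem nonpos_of_forall_not_isLocalMax {E : Type*} [NormedAddCommGroup E] [ProperSpace E]
    {S O : Set E} {f : E → ℝ} (hf : Continuous f) (hS : IsClosed S) (hO : IsOpen O)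
    (hOS : O ⊆ S) {A B μ : ℝ} (hμ : 0 < μ) (hcoer : ∀ x ∈ S, f x ≤ A * ‖x‖ + B - μ * ‖x‖ ^ 2)
    (hbdry : ∀ x ∈ S \ O, f x ≤ 0) (hloc : ∀ x ∈ O, 0 < f x → ¬ IsLocalMax f x) :
    ∀ x ∈ S, f x ≤ 0 := by
  by_contra! ⟨z, hzS, hz⟩
  set R := max 1 ((|A| + |B - f z|) / μ)
  have hfar : ∀ᶠ x in cocompact E ⊓ 𝓟 S, f x ≤ f z := by
    filter_upwards [(tendsto_norm_cocompact_atTop.eventually_ge_atTop R).filter_mono inf_le_left,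
      mem_inf_of_right (mem_principal_self S)] with x hR hx
    have h1 : 1 ≤ ‖x‖ := (le_max_left _ _).trans hR
    have h2 : |A| + |B - f z| ≤ μ * ‖x‖ := by
      rw [← div_le_iff₀' hμ]; exact (le_max_right _ _).trans hR
    nlinarith [hcoer x hx, le_abs_self A, le_abs_self (B - f z), abs_nonneg A,
      abs_nonneg (B - f z)]
  obtain ⟨x₀, hx₀S, hmax⟩ := hf.continuousOn.exists_isMaxOn' hS hzS hfar
  have hpos : 0 < f x₀ := hz.trans_le (hmax hzS)
  have hx₀O : x₀ ∈ O := by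
    by_contra h
    exact (hbdry x₀ ⟨hx₀S, h⟩).not_gt hpos
  exact hloc x₀ hx₀O hpos (hmax.isLocalMax (mem_of_superset (hO.mem_nhds hx₀O) hOS))

section Laplacian

variable {d : ℕ}

lemma lap_add {f g : EuclideanSpace ℝ (Fin d) → ℝ} (hf : ContDiff ℝ 2 f) (hg : ContDiff ℝ 2 g)
    (x : EuclideanSpace ℝ (Fin d)) : lap (fun y => f y + g y) x = lap f x + lap g x := by
  simp only [lap, ← Finset.sum_add_distrib]
  rw [fun_iteratedFDeriv_add_apply hf.contDiffAt hg.contDiffAt]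
  rfl

lemma lap_add_const (f : EuclideanSpace ℝ (Fin d) → ℝ) (a : ℝ) (x : EuclideanSpace ℝ (Fin d)) :
    lap (fun y => f y + a) x = lap f x := by
  simp only [lap, iteratedFDeriv_succ_eq_comp_right, fderiv_add_const]

lemma lap_comp_clm {h : ℝ → ℝ} (hh : ContDiff ℝ 2 h) (L : EuclideanSpace ℝ (Fin d) →L[ℝ] ℝ)
    (x : EuclideanSpace ℝ (Fin d)) : lap (fun y => h (L y)) x =
      iteratedDeriv 2 h (L x) * ∑ i, L (EuclideanSpace.single i 1) ^ 2 := by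
  simp only [lap, Finset.mul_sum]
  refine Finset.sum_congr rfl fun i _ => ?_
  rw [show (fun y => h (L y)) = h ∘ L from rfl, L.iteratedFDeriv_comp_right hh x le_rfl,
    ContinuousMultilinearMap.compContinuousLinearMap_apply,
    iteratedFDeriv_apply_eq_iteratedDeriv_mul_prod]
  simp [Fin.prod_univ_two, sq, mul_comm]

variable {c : ℝ} {ψ u φ : EuclideanSpace ℝ (Fin d) → ℝ} {Ω : Set (EuclideanSpace ℝ (Fin d))}
  {x₀ : EuclideanSpace ℝ (Fin d)}

lemma IsVSubsol.two_mul_le_lap (hu : IsVSubsol c ψ Ω u) (hx₀ : x₀ ∈ Ω) (hψ : ψ x₀ < u x₀)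
    (hφ : ContDiff ℝ 2 φ) (hmax : IsLocalMax (u - φ) x₀) : 2 * c ≤ lap φ x₀ := by
  have := hu x₀ hx₀ hψ (fun y => φ y + (u x₀ - φ x₀)) (hφ.add contDiff_const) (by ring)
    (hmax.mono fun y hy => by simp only [Pi.sub_apply] at hy; linarith)
  rw [lap_add_const] at this
  linarith

lemma IsVSupersol.lap_le_two_mul (hu : IsVSupersol c ψ Ω u) (hx₀ : x₀ ∈ Ω)
    (hφ : ContDiff ℝ 2 φ) (hmin : IsLocalMin (u - φ) x₀) : lap φ x₀ ≤ 2 * c := by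
  have := hu.2 x₀ hx₀ (fun y => φ y + (u x₀ - φ x₀)) (hφ.add contDiff_const) (by ring)
    (hmin.mono fun y hy => by simp only [Pi.sub_apply] at hy; linarith)
  rw [lap_add_const] at this
  linarith

end Laplacian

local notation "ℝ²" => EuclideanSpace ℝ (Fin 2)

lemma iteratedDeriv_two_affine_add_sq (a b k t₀ e t : ℝ) :
    iteratedDeriv 2 (fun t => a * t + b * (k * t - t₀) ^ 2 + e) t = 2 * b * k ^ 2 := by
  have hderiv : deriv (fun t => a * t + b * (k * t - t₀) ^ 2 + e) =
      fun t => a + 2 * b * k * (k * t - t₀) := by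
    funext t
    refine HasDerivAt.deriv ?_
    have := (((hasDerivAt_id' t).const_mul a).add
      ((((hasDerivAt_id' t).const_mul k).sub_const t₀).pow 2 |>.const_mul b)).add_const e
    exact this.congr_deriv
      (by simp only [mul_one, Nat.cast_ofNat, Nat.add_one_sub_one, pow_one]; ring)
  rw [iteratedDeriv_succ, iteratedDeriv_one, hderiv]
  refine HasDerivAt.deriv ?_
  have := ((((hasDerivAt_id' t).const_mul k).sub_const t₀).const_mul (2 * b * k)).const_add a
  exact this.congr_deriv (by ring)

lemma lap_eq_of_eq_comp_add_add_comp_sub {φ : ℝ² → ℝ} {F G : ℝ → ℝ} (hF : ContDiff ℝ 2 F)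
    (hG : ContDiff ℝ 2 G) (hφ : ∀ y, φ y = F (y 0 + y 1) + G (y 0 - y 1)) (x : ℝ²) :
    lap φ x = 2 * iteratedDeriv 2 F (x 0 + x 1) + 2 * iteratedDeriv 2 G (x 0 - x 1) := by
  obtain rfl : φ = fun y => F (y 0 + y 1) + G (y 0 - y 1) := funext hφ
  set P : ℝ² →L[ℝ] ℝ := EuclideanSpace.proj 0 + EuclideanSpace.proj 1
  set D : ℝ² →L[ℝ] ℝ := EuclideanSpace.proj 0 - EuclideanSpace.proj 1
  have hP : ∑ i, P (EuclideanSpace.single i 1) ^ 2 = 2 := by simp [P, Fin.sum_univ_two]; norm_num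
  have hD : ∑ i, D (EuclideanSpace.single i 1) ^ 2 = 2 := by simp [D, Fin.sum_univ_two]; norm_num
  change lap (fun y => F (P y) + G (D y)) x = _
  rw [lap_add (f := fun y => F (P y)) (g := fun y => G (D y)) (hF.comp P.contDiff)
    (hG.comp D.contDiff), lap_comp_clm hF, lap_comp_clm hG, hP, hD]
  change iteratedDeriv 2 F (x 0 + x 1) * 2 + iteratedDeriv 2 G (x 0 - x 1) * 2 = _
  ring

lemma gObst_eq_max_half (x : ℝ²) : gObst x = max ((x 0 + x 1 + |x 0 - x 1|) / 2) 0 := by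
  have hsup : (⨆ i, x i) = max (x 0) (x 1) := by
    apply le_antisymm
    · exact ciSup_le fun i => by fin_cases i <;> simp
    · exact max_le (le_ciSup (Finite.bddAbove_range _) 0) (le_ciSup (Finite.bddAbove_range _) 1)
  rw [gObst, hsup]
  congr 1
  rcases abs_cases (x 0 - x 1) with ⟨h, h'⟩ | ⟨h, h'⟩
  · rw [h, max_eq_left (by linarith)]; ring
  · rw [h, max_eq_right (by linarith)]; ring

lemma norm_sq_eq_half_add_sq (x : ℝ²) : ‖x‖ ^ 2 = ((x 0 + x 1) ^ 2 + (x 0 - x 1) ^ 2) / 2 := by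
  rw [EuclideanSpace.real_norm_sq_eq, Fin.sum_univ_two]; ring

lemma exists_abs_eq_one_mul_eq_abs (a : ℝ) : ∃ σ : ℝ, |σ| = 1 ∧ σ * a = |a| := by
  rcases abs_cases a with ⟨h, -⟩ | ⟨h, -⟩
  exacts [⟨1, abs_one, by rw [h, one_mul]⟩, ⟨-1, by simp, by rw [h]; ring⟩]

lemma max_zero_add_max_zero_of_add_eq_zero {a b : ℝ} (h : a + b = 0) :
    max a 0 + max b 0 = |a - b| / 2 := by
  obtain rfl : b = -a := by linarith
  rcases le_total 0 a with ha | ha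
  · rw [max_eq_left ha, max_eq_right (neg_nonpos.mpr ha), abs_of_nonneg (by linarith)]; ring
  · rw [max_eq_right ha, max_eq_left (neg_nonneg.mpr ha), abs_of_nonpos (by linarith)]; ring

lemma abs_div_two_le_add_sq_div {s₀ : ℝ} (hs₀ : 0 < s₀) (t : ℝ) :
    |t| / 2 ≤ t / 2 + (t - s₀) ^ 2 / (4 * s₀) := by
  have hsq : t + (t - s₀) ^ 2 / (4 * s₀) = (t + s₀) ^ 2 / (4 * s₀) := by field_simp; ring
  have : 0 ≤ (t + s₀) ^ 2 / (4 * s₀) := by positivity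
  have : 0 ≤ (t - s₀) ^ 2 / (4 * s₀) := by positivity
  rcases abs_cases t with ⟨h, -⟩ | ⟨h, -⟩ <;> rw [h] <;> linarith

lemma mul_half_sq_sub_div_le {μ k : ℝ} (hk : 0 < k) (hμ : μ ≤ 1 / k) (a b : ℝ) :
    μ * (a ^ 2 / 2) - b ^ 2 / k ≤ (a - b) ^ 2 / k := by
  have h1 : μ * (a ^ 2 / 2) ≤ a ^ 2 / 2 / k := by
    rw [div_eq_mul_one_div (a ^ 2 / 2), mul_comm]; gcongr
  have h2 : a ^ 2 / 2 - b ^ 2 ≤ (a - b) ^ 2 := by nlinarith [sq_nonneg (a - 2 * b)]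
  have h3 := div_le_div_of_nonneg_right h2 hk.le
  rw [sub_div] at h3
  linarith

/-- For `σ = 1` (resp. `σ = -1`) the first term is the coordinate `x 0` (resp. `x 1`). -/
noncomputable def upperBarrier (c σ s₀ p₀ : ℝ) (x : ℝ²) : ℝ :=
  (x 0 + x 1 + σ * (x 0 - x 1)) / 2 + (σ * (x 0 - x 1) - s₀) ^ 2 / (4 * s₀) +
    (x 0 + x 1 - p₀) ^ 2 / (4 * c * p₀ ^ 2)

section UpperBarrier

variable {c σ s₀ p₀ : ℝ}

lemma contDiff_upperBarrier : ContDiff ℝ 2 (upperBarrier c σ s₀ p₀) := by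
  unfold upperBarrier; fun_prop

lemma lap_upperBarrier (hσ : |σ| = 1) (x : ℝ²) :
    lap (upperBarrier c σ s₀ p₀) x = 1 / s₀ + 1 / (c * p₀ ^ 2) := by
  rw [lap_eq_of_eq_comp_add_add_comp_sub
    (F := fun t => 1 / 2 * t + 1 / (4 * c * p₀ ^ 2) * (1 * t - p₀) ^ 2 + 0)
    (G := fun t => σ / 2 * t + 1 / (4 * s₀) * (σ * t - s₀) ^ 2 + 0) (by fun_prop) (by fun_prop)
    (fun y => by simp only [upperBarrier]; ring), iteratedDeriv_two_affine_add_sq,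
    iteratedDeriv_two_affine_add_sq, ← sq_abs σ, hσ]
  ring

lemma add_abs_div_two_le_upperBarrier (hσ : |σ| = 1) (hs₀ : 0 < s₀) (x : ℝ²) :
    (x 0 + x 1 + |x 0 - x 1|) / 2 + (x 0 + x 1 - p₀) ^ 2 / (4 * c * p₀ ^ 2) ≤
      upperBarrier c σ s₀ p₀ x := by
  have h := abs_div_two_le_add_sq_div hs₀ (σ * (x 0 - x 1))
  rw [abs_mul, hσ, one_mul] at h
  simp only [upperBarrier]
  linarith

lemma sum_abs_sub_upperBarrier_le (hc : 0 < c) (hσ : |σ| = 1) (hs₀ : 0 < s₀) (hp₀ : 0 < p₀)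
    (x : ℝ²) : ∑ i, |x i| - upperBarrier c σ s₀ p₀ x ≤
      4 * ‖x‖ + (s₀ / 4 + 1 / (4 * c)) - min (1 / (4 * s₀)) (1 / (4 * c * p₀ ^ 2)) * ‖x‖ ^ 2 := by
  set μ := min (1 / (4 * s₀)) (1 / (4 * c * p₀ ^ 2))
  have hcoord (i : Fin 2) : |x i| ≤ ‖x‖ := by
    simpa only [Real.norm_eq_abs] using PiLp.norm_apply_le x i
  have hlin : -(x 0 + x 1 + σ * (x 0 - x 1)) / 2 ≤ |x 0| + |x 1| := by
    have := abs_add_le (x 0 + x 1) (σ * (x 0 - x 1))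
    have := abs_add_le (x 0) (x 1)
    have := abs_sub (x 0) (x 1)
    have := neg_abs_le (x 0 + x 1 + σ * (x 0 - x 1))
    rw [abs_mul, hσ, one_mul] at *
    linarith
  have hs := mul_half_sq_sub_div_le (by positivity) (min_le_left _ _ : μ ≤ 1 / (4 * s₀))
    (σ * (x 0 - x 1)) s₀
  have hp := mul_half_sq_sub_div_le (by positivity) (min_le_right _ _ : μ ≤ 1 / (4 * c * p₀ ^ 2))
    (x 0 + x 1) p₀
  rw [mul_pow, ← sq_abs σ, hσ, one_pow, one_mul] at hs
  have hs₀' : s₀ ^ 2 / (4 * s₀) = s₀ / 4 := by field_simp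
  have hp₀' : p₀ ^ 2 / (4 * c * p₀ ^ 2) = 1 / (4 * c) := by field_simp
  rw [Fin.sum_univ_two, norm_sq_eq_half_add_sq]
  simp only [upperBarrier]
  linarith [hcoord 0, hcoord 1]

lemma le_upperBarrier {C : ℝ} {u : ℝ² → ℝ} (hc : 0 < c) (hucont : Continuous u)
    (hsub : IsVSubsol c gObst Set.univ u) (hC : ∀ x : ℝ², u x ≤ ∑ i, |x i| + C)
    (hub : ∀ x : ℝ², u x ≤ max (x 0) 0 + max (x 1) 0 + 1 / (4 * c))
    (hσ : |σ| = 1) (hs₀ : 0 < s₀) (hp₀ : 0 < p₀) (hlap : 1 / s₀ + 1 / (c * p₀ ^ 2) < 2 * c)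
    (x : ℝ²) (hx : 0 ≤ x 0 + x 1) : u x ≤ upperBarrier c σ s₀ p₀ x := by
  set ψ := upperBarrier c σ s₀ p₀
  have hψ := add_abs_div_two_le_upperBarrier (c := c) (p₀ := p₀) hσ hs₀
  have hp₀' : p₀ ^ 2 / (4 * c * p₀ ^ 2) = 1 / (4 * c) := by field_simp
  have hgψ (y : ℝ²) (hy : 0 ≤ y 0 + y 1) : gObst y ≤ ψ y := by
    have : 0 ≤ (y 0 + y 1 - p₀) ^ 2 / (4 * c * p₀ ^ 2) := by positivity
    rw [gObst_eq_max_half]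
    exact max_le (by linarith [hψ y]) (by linarith [hψ y, abs_nonneg (y 0 - y 1)])
  suffices (u - ψ) x ≤ 0 by simpa [sub_nonpos] using this
  refine nonpos_of_forall_not_isLocalMax (S := {y | 0 ≤ y 0 + y 1}) (O := {y | 0 < y 0 + y 1})
    (hucont.sub contDiff_upperBarrier.continuous) (isClosed_le continuous_const (by fun_prop))
    (isOpen_lt continuous_const (by fun_prop)) (fun _ hy => le_of_lt hy) (A := 4)
    (B := C + s₀ / 4 + 1 / (4 * c)) (μ := min (1 / (4 * s₀)) (1 / (4 * c * p₀ ^ 2)))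
    (lt_min (by positivity) (by positivity)) ?_ ?_ ?_ x hx
  · intro y _
    have := sum_abs_sub_upperBarrier_le hc hσ hs₀ hp₀ y
    have := hC y
    simp only [Pi.sub_apply]
    linarith
  · rintro y ⟨hy, hy'⟩
    have hp : y 0 + y 1 = 0 := le_antisymm (not_lt.mp hy') hy
    have hψy := hψ y
    rw [hp, zero_sub, neg_sq, hp₀'] at hψy
    have hu := hub y
    rw [max_zero_add_max_zero_of_add_eq_zero hp] at hu
    simp only [Pi.sub_apply]
    linarith
  · intro y hy hpos hmax
    have hgu : gObst y < u y := by
      have := hgψ y (le_of_lt hy); simp only [Pi.sub_apply] at hpos; linarith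
    have := hsub.two_mul_le_lap (Set.mem_univ y) hgu contDiff_upperBarrier hmax
    rw [lap_upperBarrier hσ] at this
    linarith

end UpperBarrier

noncomputable def lowerBarrier (τ β p₁ : ℝ) (x : ℝ²) : ℝ :=
  (x 0 + x 1) / 2 - β * (x 0 + x 1 - p₁) ^ 2 + (x 0 - x 1) ^ 2 / (4 * τ) + τ / 4

section LowerBarrier

variable {τ β p₁ : ℝ}

lemma contDiff_lowerBarrier : ContDiff ℝ 2 (lowerBarrier τ β p₁) := by
  unfold lowerBarrier; fun_prop

lemma lap_lowerBarrier (x : ℝ²) : lap (lowerBarrier τ β p₁) x = 1 / τ - 4 * β := by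
  rw [lap_eq_of_eq_comp_add_add_comp_sub (F := fun t => 1 / 2 * t + -β * (1 * t - p₁) ^ 2 + 0)
    (G := fun t => 0 * t + 1 / (4 * τ) * (1 * t - 0) ^ 2 + τ / 4) (by fun_prop) (by fun_prop)
    (fun y => by simp only [lowerBarrier]; ring), iteratedDeriv_two_affine_add_sq,
    iteratedDeriv_two_affine_add_sq]
  ring

lemma lowerBarrier_sub_add_abs_div_two (hτ : 0 < τ) (x : ℝ²) :
    lowerBarrier τ β p₁ x - (x 0 + x 1 + |x 0 - x 1|) / 2 =
      (|x 0 - x 1| - τ) ^ 2 / (4 * τ) - β * (x 0 + x 1 - p₁) ^ 2 := by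
  rw [lowerBarrier, ← sq_abs (x 0 - x 1)]
  field_simp
  ring

lemma lowerBarrier_le {c : ℝ} {u : ℝ² → ℝ} (hucont : Continuous u)
    (hsup : IsVSupersol c gObst Set.univ u) (hτ : 0 < τ) (hβ : 0 < β)
    (hlap : 2 * c < 1 / τ - 4 * β) (x : ℝ²) (hx : |x 0 - x 1| ≤ τ) :
    lowerBarrier τ β p₁ x ≤ u x := by
  set W := lowerBarrier τ β p₁
  have hW (y : ℝ²) :
      W y - u y ≤ (|y 0 - y 1| - τ) ^ 2 / (4 * τ) - β * (y 0 + y 1 - p₁) ^ 2 := by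
    have := lowerBarrier_sub_add_abs_div_two (β := β) (p₁ := p₁) hτ y
    have := (le_max_left _ _).trans (gObst_eq_max_half y).ge |>.trans (hsup.1 y (Set.mem_univ y))
    linarith
  suffices (W - u) x ≤ 0 by simpa [sub_nonpos] using this
  refine nonpos_of_forall_not_isLocalMax (S := {y : ℝ² | |y 0 - y 1| ≤ τ})
    (O := {y : ℝ² | |y 0 - y 1| < τ}) (contDiff_lowerBarrier.continuous.sub hucont)
    (isClosed_le (by fun_prop) continuous_const) (isOpen_lt (by fun_prop) continuous_const)
    (fun _ hy => le_of_lt (α := ℝ) hy) (A := 0) (B := τ / 4 + β * τ ^ 2 / 2 + β * p₁ ^ 2) hβ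
    ?_ ?_ ?_ x hx
  · intro y (hy : |y 0 - y 1| ≤ τ)
    have hs : (|y 0 - y 1| - τ) ^ 2 / (4 * τ) ≤ τ / 4 := by
      rw [div_le_iff₀ (by positivity)]
      nlinarith [abs_nonneg (y 0 - y 1)]
    have hp : β * ((y 0 + y 1) ^ 2 / 2 - p₁ ^ 2) ≤ β * (y 0 + y 1 - p₁) ^ 2 := by
      gcongr; nlinarith [sq_nonneg (y 0 + y 1 - 2 * p₁)]
    have hn := norm_sq_eq_half_add_sq y
    have : (y 0 - y 1) ^ 2 ≤ τ ^ 2 := by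
      rw [← sq_abs]; exact pow_le_pow_left₀ (abs_nonneg _) hy 2
    simp only [Pi.sub_apply]
    nlinarith [hW y]
  · rintro y ⟨hy, hy'⟩
    have hs : |y 0 - y 1| = τ := le_antisymm hy (not_lt.mp hy')
    have := hW y
    rw [hs, sub_self, zero_pow two_ne_zero, zero_div, zero_sub] at this
    simp only [Pi.sub_apply]
    nlinarith [sq_nonneg (y 0 + y 1 - p₁)]
  · intro y _ _ hmax
    have hmin : IsLocalMin (u - W) y := by rw [← neg_sub]; exact hmax.neg
    have := hsup.lap_le_two_mul (Set.mem_univ y) contDiff_lowerBarrier hmin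
    rw [lap_lowerBarrier] at this
    linarith

end LowerBarrier

section FreeBoundary

variable {c C : ℝ} {u : ℝ² → ℝ}

lemma le_gObst_of_one_div_add_one_div_le (hc : 0 < c) (hucont : Continuous u)
    (hsub : IsVSubsol c gObst Set.univ u) (hC : ∀ x : ℝ², u x ≤ ∑ i, |x i| + C)
    (hub : ∀ x : ℝ², u x ≤ max (x 0) 0 + max (x 1) 0 + 1 / (4 * c))
    {x : ℝ²} (hp : 0 < x 0 + x 1) (hs : 0 < |x 0 - x 1|)
    (hsum : 1 / |x 0 - x 1| + 1 / (c * (x 0 + x 1) ^ 2) ≤ 2 * c) : u x ≤ gObst x := by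
  obtain ⟨σ, hσ, hσs⟩ := exists_abs_eq_one_mul_eq_abs (x 0 - x 1)
  rw [gObst_eq_max_half, max_eq_left (by positivity)]
  refine le_of_forall_pos_le_add fun δ hδ => ?_
  have hlap : 1 / (|x 0 - x 1| + δ) + 1 / (c * (x 0 + x 1) ^ 2) < 2 * c := by
    have := one_div_lt_one_div_of_lt hs (lt_add_of_pos_right _ hδ)
    linarith
  have hux := le_upperBarrier hc hucont hsub hC hub hσ (by positivity) hp hlap x hp.le
  have hδ' : δ ^ 2 / (4 * (|x 0 - x 1| + δ)) ≤ δ := by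
    rw [div_le_iff₀ (by positivity)]; nlinarith
  simp only [upperBarrier, hσs, sub_self, zero_pow two_ne_zero, zero_div, add_zero,
    sub_add_cancel_left, neg_sq] at hux
  linarith

lemma gObst_lt_of_abs_sub_lt (hc : 0 < c) (hucont : Continuous u)
    (hsup : IsVSupersol c gObst Set.univ u) {x : ℝ²} (hp : 0 ≤ x 0 + x 1)
    (hs : |x 0 - x 1| < 1 / (2 * c)) : gObst x < u x := by
  set τ := (|x 0 - x 1| + 1 / (2 * c)) / 2 with hτdef
  have hτ : 0 < τ := by positivity
  have hsτ : |x 0 - x 1| < τ := by rw [hτdef]; linarith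
  have hcτ : 2 * c < 1 / τ := (lt_one_div (by positivity) hτ).mpr (by rw [hτdef]; linarith)
  set β := (1 / τ - 2 * c) / 8 with hβdef
  have hW := lowerBarrier_le (β := β) (p₁ := x 0 + x 1) hucont hsup hτ (by linarith)
    (by linarith) x hsτ.le
  have hgap : 0 < (|x 0 - x 1| - τ) ^ 2 / (4 * τ) := by
    have : |x 0 - x 1| - τ ≠ 0 := by linarith
    positivity
  have := lowerBarrier_sub_add_abs_div_two (β := β) (p₁ := x 0 + x 1) hτ x
  rw [sub_self, zero_pow two_ne_zero, mul_zero, sub_zero] at this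
  rw [gObst_eq_max_half, max_eq_left (by positivity)]
  linarith

lemma one_div_two_mul_le_abs_sub_of_mem_frontier (hc : 0 < c) (hucont : Continuous u)
    (hsup : IsVSupersol c gObst Set.univ u) {x : ℝ²}
    (hx : x ∈ frontier {y | gObst y < u y}) (hp : 0 < x 0 + x 1) :
    1 / (2 * c) ≤ |x 0 - x 1| := by
  by_contra! hs
  have hnhds : {y : ℝ² | 0 < y 0 + y 1 ∧ |y 0 - y 1| < 1 / (2 * c)} ∈ nhds x :=
    ((isOpen_lt continuous_const (by fun_prop : Continuous fun y : ℝ² => y 0 + y 1)).inter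
      (isOpen_lt (by fun_prop : Continuous fun y : ℝ² => |y 0 - y 1|) continuous_const)).mem_nhds
      ⟨hp, hs⟩
  exact hx.2 (mem_interior_iff_mem_nhds.mpr (mem_of_superset hnhds
    fun y hy => gObst_lt_of_abs_sub_lt hc hucont hsup hy.1.le hy.2))

lemma two_mul_le_one_div_add_one_div_of_mem_frontier (hc : 0 < c) (hucont : Continuous u)
    (hsub : IsVSubsol c gObst Set.univ u) (hC : ∀ x : ℝ², u x ≤ ∑ i, |x i| + C)
    (hub : ∀ x : ℝ², u x ≤ max (x 0) 0 + max (x 1) 0 + 1 / (4 * c)) {x : ℝ²}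
    (hx : x ∈ frontier {y | gObst y < u y}) (hp : 0 < x 0 + x 1) (hs : 0 < |x 0 - x 1|) :
    2 * c ≤ 1 / |x 0 - x 1| + 1 / (c * (x 0 + x 1) ^ 2) := by
  by_contra! hsum
  have hden : c * (x 0 + x 1) ^ 2 ≠ 0 := by positivity
  have hs' : |x 0 - x 1| ≠ 0 := hs.ne'
  have hsum_cont :
      ContinuousAt (fun y : ℝ² => 1 / |y 0 - y 1| + 1 / (c * (y 0 + y 1) ^ 2)) x := by
    fun_prop (disch := assumption)
  have hnhds : ∀ᶠ y in nhds x, 0 < y 0 + y 1 ∧ 0 < |y 0 - y 1| ∧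
      1 / |y 0 - y 1| + 1 / (c * (y 0 + y 1) ^ 2) < 2 * c :=
    (continuousAt_const.eventually_lt (g := fun y : ℝ² => y 0 + y 1) (by fun_prop) hp).and
      ((continuousAt_const.eventually_lt (g := fun y : ℝ² => |y 0 - y 1|) (by fun_prop) hs).and
        (hsum_cont.eventually_lt continuousAt_const hsum))
  obtain ⟨y, ⟨hyp, hys, hysum⟩, hy⟩ := mem_closure_iff_nhds.mp hx.1 _ hnhds
  exact (le_gObst_of_one_div_add_one_div_le hc hucont hsub hC hub hyp hys hysum.le).not_gt hy

end FreeBoundary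

lemma infDist_setOf_abs_sub_eq_le (x : ℝ²) {r : ℝ} (hr : 0 ≤ r) (hrx : r ≤ |x 0 - x 1|) :
    Metric.infDist x {y : ℝ² | |y 0 - y 1| = r} ≤ (|x 0 - x 1| - r) / √2 := by
  obtain ⟨σ, hσ, hσs⟩ := exists_abs_eq_one_mul_eq_abs (x 0 - x 1)
  set δ := σ * (r - |x 0 - x 1|) / 2
  have hσ2 : σ * σ = 1 := by rw [← abs_mul_abs_self, hσ, one_mul]
  refine (Metric.infDist_le_dist_of_mem (y := !₂[x 0 + δ, x 1 - δ]) ?_).trans (le_of_eq ?_)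
  · have : x 0 + δ - (x 1 - δ) = σ * r := by
      simp only [δ]; rw [← hσs]; linear_combination -(x 0 - x 1) * hσ2
    simp [this, abs_mul, hσ, hr]
  · rw [EuclideanSpace.dist_eq, Fin.sum_univ_two]
    have hδ : |δ| = (|x 0 - x 1| - r) / 2 := by
      rw [abs_div, abs_mul, hσ, one_mul, abs_of_nonpos (by linarith), abs_two]; ring
    simp only [Matrix.cons_val_zero, Matrix.cons_val_one, Matrix.cons_val_fin_one,
      dist_self_add_right, dist_self_sub_right, Real.norm_eq_abs, sq_abs]
    rw [← two_mul, Real.sqrt_mul zero_le_two, Real.sqrt_sq_eq_abs, hδ,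
      eq_div_iff (by positivity), mul_right_comm, Real.mul_self_sqrt zero_le_two]
    ring

lemma pos_and_one_div_mul_sq_le_of_le_div_sqrt_two {c T p : ℝ} (hc : 0 < c) (hT : 0 < T)
    (h : T ≤ p / √2) : 0 < p ∧ 1 / (c * p ^ 2) ≤ 1 / (2 * c * T ^ 2) := by
  have hp : √2 * T ≤ p := by rwa [le_div_iff₀ (by positivity), mul_comm] at h
  have hp0 : 0 < p := lt_of_lt_of_le (by positivity) hp
  refine ⟨hp0, one_div_le_one_div_of_le (by positivity) ?_⟩
  have := pow_le_pow_left₀ (by positivity) hp 2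
  rw [mul_pow, Real.sq_sqrt zero_le_two] at this
  nlinarith

/-- Asymptotic localization of the free boundary in dimension two. -/
theorem asymptotic_localization_free_boundary (c : ℝ) (hc : 0 < c)
    (u : EuclideanSpace ℝ (Fin 2) → ℝ) (hucont : Continuous u)
    (hu : IsVSol c gObst Set.univ u) (hgrowth : LinGrowth gObst u)
    (hub : ∀ x : EuclideanSpace ℝ (Fin 2),
      u x ≤ max (x 0) 0 + max (x 1) 0 + 1 / (4 * c)) :
    (∀ ε ∈ Set.Ioo (0 : ℝ) c, ∀ x : EuclideanSpace ℝ (Fin 2),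
        1 / (2 * Real.sqrt (c * ε)) ≤ (x 0 + x 1) / Real.sqrt 2 →
        1 / (2 * (c - ε)) ≤ |x 0 - x 1| → u x = gObst x) ∧
    (∀ x : EuclideanSpace ℝ (Fin 2),
        0 ≤ x 0 + x 1 → |x 0 - x 1| < 1 / (2 * c) → gObst x < u x) ∧
    (∀ T : ℝ, 1 / (2 * c) < T →
      ∀ x ∈ frontier {y : EuclideanSpace ℝ (Fin 2) | gObst y < u y},
        T ≤ (x 0 + x 1) / Real.sqrt 2 →
          (1 / (2 * c) ≤ |x 0 - x 1| ∧
            |x 0 - x 1| ≤ 1 / (2 * (c - 1 / (4 * c * T ^ 2)))) ∧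
          Metric.infDist x {y : EuclideanSpace ℝ (Fin 2) | |y 0 - y 1| = 1 / (2 * c)} ≤
            (1 / (4 * c * T ^ 2)) /
              (2 * Real.sqrt 2 * c * (c - 1 / (4 * c * T ^ 2)))) := by
  obtain ⟨hsub, hsup⟩ := hu
  obtain ⟨hg, C, hC⟩ := hgrowth
  refine ⟨fun ε ⟨hε, hεc⟩ x hp hs => ?_,
    fun x hp hs => gObst_lt_of_abs_sub_lt hc hucont hsup hp hs, fun T hT x hx hp => ?_⟩
  · obtain ⟨hp, hpε⟩ := pos_and_one_div_mul_sq_le_of_le_div_sqrt_two hc (by positivity) hp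
    have h2ε : 1 / (2 * c * (1 / (2 * √(c * ε))) ^ 2) = 2 * ε := by
      rw [div_pow, mul_pow, Real.sq_sqrt (by positivity)]; field_simp
    have hs' : 0 < |x 0 - x 1| := lt_of_lt_of_le (by have := sub_pos.mpr hεc; positivity) hs
    have hsε := (one_div_le (by linarith) hs').mp hs
    refine le_antisymm (le_gObst_of_one_div_add_one_div_le hc hucont hsub hC hub hp hs' ?_) (hg x)
    linarith
  · set ε := 1 / (4 * c * T ^ 2)
    have hT0 : 0 < T := lt_trans (by positivity) hT
    obtain ⟨hp, hpε⟩ := pos_and_one_div_mul_sq_le_of_le_div_sqrt_two hc hT0 hp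
    have hεc : ε < c := by
      have := (div_lt_iff₀ (by positivity)).mp hT
      rw [div_lt_iff₀ (by positivity)]
      nlinarith
    have hlow := one_div_two_mul_le_abs_sub_of_mem_frontier hc hucont hsup hx hp
    have hs : 0 < |x 0 - x 1| := lt_of_lt_of_le (by positivity) hlow
    have hup : |x 0 - x 1| ≤ 1 / (2 * (c - ε)) := by
      have := two_mul_le_one_div_add_one_div_of_mem_frontier hc hucont hsub hC hub hx hp hs
      rw [le_one_div hs (by linarith)]
      linarith [show 1 / (2 * c * T ^ 2) = 2 * ε by ring]
    refine ⟨⟨hlow, hup⟩, (infDist_setOf_abs_sub_eq_le x (by positivity) hlow).trans ?_⟩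
    have : c - ε ≠ 0 := sub_ne_zero.mpr hεc.ne'
    calc (|x 0 - x 1| - 1 / (2 * c)) / √2 ≤ (1 / (2 * (c - ε)) - 1 / (2 * c)) / √2 := by gcongr
      _ = ε / (2 * √2 * c * (c - ε)) := by field_simp; ring
end

section
/- Integral inequality for the mollifier profile: Let μ(R) = exp(−1/(1 − R²)) for 0 ≤ R < 1 and μ(R) = 0 for R ≥ 1. There exists a constant C > 0, independent of d, such that for every integer d ≥ 2, ∫₀¹ |μ'(R)|·R^{d−1} dR ≤ C·(d − 1)·∫₀¹ μ(R)·R^{d−1} dR. -/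
/-!
Integrating by parts (the boundary terms vanish since `μ 1 = 0`, and `μ' ≤ 0` on `[0, 1]`) turns
the left side into `(d - 1) ∫₀¹ μ R^(d-2)`, so it remains to bound `∫₀¹ μ R^k` by a multiple of
`∫₀¹ μ R^(k+1)` uniformly in `k`. On `[1/2, 1]` one has `R^k ≤ 2 R^(k+1)`; the part over
`[0, 1/2]` is at most `2^(-k-1)`, while `μ ≥ e^(-3)` on `[1/2, 3/4]` gives
`∫₀¹ μ R^(k+1) ≥ e^(-3) 2^(-k-3)`. Regularity of `μ` comes from `μ R = expNegInvGlue (1 - R²)`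
for `R > -1`.
-/

noncomputable def mollProfile (R : ℝ) : ℝ :=
  if R < 1 then Real.exp (-1 / (1 - R ^ 2)) else 0

open Real Set Filter Topology MeasureTheory

lemma integral_deriv_mul_pow_succ {u u' : ℝ → ℝ}
    (hu : ∀ x ∈ Icc (0 : ℝ) 1, HasDerivAt u (u' x) x)
    (hu' : IntervalIntegrable u' volume 0 1) (hu1 : u 1 = 0) (k : ℕ) :
    ∫ x in (0 : ℝ)..1, u' x * x ^ (k + 1) = -((k + 1) * ∫ x in (0 : ℝ)..1, u x * x ^ k) := by
  have hpow : ∀ x ∈ uIcc (0 : ℝ) 1, HasDerivAt (fun x ↦ x ^ (k + 1)) ((k + 1) * x ^ k) x :=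
    fun x _ ↦ by simpa using hasDerivAt_pow (k + 1) x
  have hparts := intervalIntegral.integral_mul_deriv_eq_deriv_mul
    (fun x hx ↦ hu x (by simpa using hx)) hpow hu'
    (by apply ContinuousOn.intervalIntegrable; fun_prop)
  rw [hu1, zero_mul, zero_pow k.succ_ne_zero, mul_zero, sub_zero, zero_sub] at hparts
  rw [← intervalIntegral.integral_const_mul, ← neg_eq_iff_eq_neg, ← hparts]
  congr 1 with x
  ring

section PowerMoments

variable {f : ℝ → ℝ}

lemma intervalIntegrable_mul_pow (hf : ContinuousOn f (Icc 0 1)) (j : ℕ) {a b : ℝ}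
    (ha : a ∈ Icc (0 : ℝ) 1) (hb : b ∈ Icc (0 : ℝ) 1) :
    IntervalIntegrable (fun x ↦ f x * x ^ j) volume a b :=
  ((hf.mul (by fun_prop)).mono (uIcc_subset_Icc ha hb)).intervalIntegrable

lemma integral_mul_pow_mono_interval (hf : ContinuousOn f (Icc 0 1))
    (hf0 : ∀ x ∈ Icc (0 : ℝ) 1, 0 ≤ f x) (j : ℕ) {a b : ℝ} (ha : 0 ≤ a) (hab : a ≤ b)
    (hb : b ≤ 1) :
    ∫ x in a..b, f x * x ^ j ≤ ∫ x in (0 : ℝ)..1, f x * x ^ j :=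
  intervalIntegral.integral_mono_interval ha hab hb
    ((ae_restrict_mem measurableSet_Ioc).mono fun x hx ↦
      mul_nonneg (hf0 x (Ioc_subset_Icc_self hx)) (pow_nonneg (Ioc_subset_Icc_self hx).1 j))
    (intervalIntegrable_mul_pow hf j (by norm_num) (by norm_num))

lemma mul_half_pow_le_integral_mul_pow {m : ℝ} (hf : ContinuousOn f (Icc 0 1))
    (hf0 : ∀ x ∈ Icc (0 : ℝ) 1, 0 ≤ f x) (hmf : ∀ x ∈ Icc (1 / 2 : ℝ) (3 / 4), m ≤ f x)
    (j : ℕ) :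
    m / 4 * (1 / 2) ^ j ≤ ∫ x in (0 : ℝ)..1, f x * x ^ j := calc
  m / 4 * (1 / 2) ^ j = ∫ _ in (1 / 2 : ℝ)..(3 / 4), m * (1 / 2) ^ j := by
    rw [intervalIntegral.integral_const, smul_eq_mul]; ring
  _ ≤ ∫ x in (1 / 2 : ℝ)..(3 / 4), f x * x ^ j :=
    intervalIntegral.integral_mono_on (by norm_num) intervalIntegrable_const
      (intervalIntegrable_mul_pow hf j (by norm_num) (by norm_num))
      fun x hx ↦ mul_le_mul (hmf x hx) (pow_le_pow_left₀ (by norm_num) hx.1 _)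
        (by positivity) (hf0 x ⟨by linarith [hx.1], by linarith [hx.2]⟩)
  _ ≤ ∫ x in (0 : ℝ)..1, f x * x ^ j :=
    integral_mul_pow_mono_interval hf hf0 j (by norm_num) (by norm_num) (by norm_num)

lemma integral_mul_pow_le_integral_mul_pow_succ {M m : ℝ}
    (hf : ContinuousOn f (Icc 0 1)) (hf0 : ∀ x ∈ Icc (0 : ℝ) 1, 0 ≤ f x)
    (hM : ∀ x ∈ Icc (0 : ℝ) (1 / 2), f x ≤ M) (hm : 0 < m)
    (hmf : ∀ x ∈ Icc (1 / 2 : ℝ) (3 / 4), m ≤ f x) (k : ℕ) :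
    ∫ x in (0 : ℝ)..1, f x * x ^ k ≤
      (2 + 4 * M / m) * ∫ x in (0 : ℝ)..1, f x * x ^ (k + 1) := by
  set I := ∫ x in (0 : ℝ)..1, f x * x ^ (k + 1)
  have hM0 : 0 ≤ M := (hf0 0 (by norm_num)).trans (hM 0 (by norm_num))
  have hsmall : ∫ x in (0 : ℝ)..(1 / 2), f x * x ^ k ≤ 4 * M / m * I := calc
    ∫ x in (0 : ℝ)..(1 / 2), f x * x ^ k ≤ ∫ _ in (0 : ℝ)..(1 / 2), M * (1 / 2) ^ k :=
      intervalIntegral.integral_mono_on (by norm_num)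
        (intervalIntegrable_mul_pow hf k (by norm_num) (by norm_num)) intervalIntegrable_const
        fun x hx ↦ mul_le_mul (hM x hx) (pow_le_pow_left₀ hx.1 hx.2 _) (pow_nonneg hx.1 _) hM0
    _ = 4 * M / m * (m / 4 * (1 / 2) ^ (k + 1)) := by
      rw [intervalIntegral.integral_const, smul_eq_mul, pow_succ]; field_simp; ring
    _ ≤ 4 * M / m * I := by
      gcongr
      exact mul_half_pow_le_integral_mul_pow hf hf0 hmf (k + 1)
  have hlarge : ∫ x in (1 / 2 : ℝ)..1, f x * x ^ k ≤ 2 * I := calc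
    ∫ x in (1 / 2 : ℝ)..1, f x * x ^ k ≤ ∫ x in (1 / 2 : ℝ)..1, 2 * (f x * x ^ (k + 1)) :=
      intervalIntegral.integral_mono_on (by norm_num)
        (intervalIntegrable_mul_pow hf k (by norm_num) (by norm_num))
        ((intervalIntegrable_mul_pow hf (k + 1) (by norm_num) (by norm_num)).const_mul 2)
        fun x hx ↦ by
          have hx0 : 0 ≤ f x * x ^ k :=
            mul_nonneg (hf0 x ⟨by linarith [hx.1], hx.2⟩) (pow_nonneg (by linarith [hx.1]) k)
          rw [pow_succ]; nlinarith [hx.1]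
    _ ≤ 2 * I := by
      rw [intervalIntegral.integral_const_mul]
      gcongr
      exact integral_mul_pow_mono_interval hf hf0 _ (by norm_num) (by norm_num) le_rfl
  rw [← intervalIntegral.integral_add_adjacent_intervals (b := 1 / 2)
    (intervalIntegrable_mul_pow hf k (by norm_num) (by norm_num))
    (intervalIntegrable_mul_pow hf k (by norm_num) (by norm_num))]
  linarith

end PowerMoments

section MollProfile

variable {R : ℝ}

lemma mollProfile_eq_expNegInvGlue (hR : -1 < R) :
    mollProfile R = expNegInvGlue (1 - R ^ 2) := by
  unfold mollProfile expNegInvGlue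
  split_ifs with h1 h2 h2
  · nlinarith
  · rw [neg_div, one_div]
  · rfl
  · nlinarith

lemma mollProfile_eventuallyEq (hR : -1 < R) :
    mollProfile =ᶠ[𝓝 R] fun x ↦ expNegInvGlue (1 - x ^ 2) :=
  eventually_of_mem (Ioi_mem_nhds hR) fun _ hx ↦ mollProfile_eq_expNegInvGlue hx

lemma contDiff_expNegInvGlue_one_sub_sq :
    ContDiff ℝ 1 fun x : ℝ ↦ expNegInvGlue (1 - x ^ 2) :=
  expNegInvGlue.contDiff.comp (by fun_prop)

lemma hasDerivAt_mollProfile (hR : -1 < R) : HasDerivAt mollProfile (deriv mollProfile R) R :=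
  ((contDiff_expNegInvGlue_one_sub_sq.differentiable one_ne_zero R).congr_of_eventuallyEq
    (mollProfile_eventuallyEq hR)).hasDerivAt

lemma continuousOn_deriv_mollProfile : ContinuousOn (deriv mollProfile) (Ioi (-1)) := by
  have hcont := contDiff_expNegInvGlue_one_sub_sq.continuous_deriv le_rfl
  refine fun x hx ↦ (hcont.continuousAt.congr ?_).continuousWithinAt
  filter_upwards [Ioi_mem_nhds hx] with y hy
  exact ((mollProfile_eventuallyEq hy).deriv_eq).symm

lemma continuousOn_mollProfile : ContinuousOn mollProfile (Ioi (-1)) :=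
  fun _ hx ↦ (hasDerivAt_mollProfile hx).continuousAt.continuousWithinAt

lemma deriv_mollProfile_nonpos (hR : 0 ≤ R) : deriv mollProfile R ≤ 0 := by
  have hglue : HasDerivAt expNegInvGlue (deriv expNegInvGlue (1 - R ^ 2)) (1 - R ^ 2) :=
    ((expNegInvGlue.contDiff (n := 1)).differentiable one_ne_zero _).hasDerivAt
  have hsq : HasDerivAt (fun x : ℝ ↦ 1 - x ^ 2) (-(2 * R)) R := by
    simpa using (hasDerivAt_pow 2 R).const_sub 1
  rw [((hglue.comp R hsq).congr_of_eventuallyEq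
    (mollProfile_eventuallyEq (by linarith))).deriv]
  exact mul_nonpos_of_nonneg_of_nonpos expNegInvGlue.monotone.deriv_nonneg (by linarith)

lemma mollProfile_nonneg (R : ℝ) : 0 ≤ mollProfile R := by
  unfold mollProfile; split_ifs <;> positivity

lemma mollProfile_le_one (hR : 0 ≤ R) : mollProfile R ≤ 1 := by
  unfold mollProfile
  split_ifs with h
  · exact exp_le_one_iff.2 (div_nonpos_of_nonpos_of_nonneg (by norm_num) (by nlinarith))
  · exact zero_le_one

lemma exp_neg_three_le_mollProfile (h1 : 1 / 2 ≤ R) (h2 : R ≤ 3 / 4) :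
    exp (-3) ≤ mollProfile R := by
  rw [mollProfile, if_pos (by linarith), exp_le_exp, neg_div, neg_le_neg_iff,
    div_le_iff₀ (by nlinarith)]
  nlinarith

lemma mollProfile_one : mollProfile 1 = 0 := by simp [mollProfile]

lemma integral_abs_deriv_mollProfile_mul_pow (k : ℕ) :
    ∫ R in (0 : ℝ)..1, |deriv mollProfile R| * R ^ (k + 1) =
      (k + 1) * ∫ R in (0 : ℝ)..1, mollProfile R * R ^ k := by
  have hderiv : ∀ x ∈ Icc (0 : ℝ) 1, HasDerivAt mollProfile (deriv mollProfile x) x :=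
    fun x hx ↦ hasDerivAt_mollProfile (by linarith [hx.1])
  have hint : IntervalIntegrable (deriv mollProfile) volume 0 1 :=
    (continuousOn_deriv_mollProfile.mono fun x hx ↦ by
      rw [uIcc_of_le zero_le_one] at hx; exact show -1 < x by linarith [hx.1]).intervalIntegrable
  rw [← neg_neg ((k + 1 : ℝ) * _), ← integral_deriv_mul_pow_succ hderiv hint mollProfile_one k,
    ← intervalIntegral.integral_neg]
  refine intervalIntegral.integral_congr fun x hx ↦ ?_
  rw [uIcc_of_le zero_le_one] at hx
  simp only [abs_of_nonpos (deriv_mollProfile_nonpos hx.1), neg_mul]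

end MollProfile

/-- Integral inequality for the mollifier profile. -/
theorem mollifier_profile_integral_inequality :
    ∃ C : ℝ, 0 < C ∧ ∀ d : ℕ, 2 ≤ d →
      (∫ R in (0 : ℝ)..1, |deriv mollProfile R| * R ^ (d - 1)) ≤
        C * ((d : ℝ) - 1) * ∫ R in (0 : ℝ)..1, mollProfile R * R ^ (d - 1) := by
  refine ⟨2 + 4 * exp 3, by positivity, fun d hd ↦ ?_⟩
  obtain ⟨k, rfl⟩ := Nat.exists_eq_add_of_le' hd
  have hcomp := integral_mul_pow_le_integral_mul_pow_succ
    (continuousOn_mollProfile.mono fun x hx ↦ show -1 < x by linarith [hx.1])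
    (fun x _ ↦ mollProfile_nonneg x) (fun x hx ↦ mollProfile_le_one hx.1) (exp_pos (-3))
    (fun x hx ↦ exp_neg_three_le_mollProfile hx.1 hx.2) k
  rw [exp_neg, mul_one, div_inv_eq_mul] at hcomp
  rw [show k + 2 - 1 = k + 1 from rfl, integral_abs_deriv_mollProfile_mul_pow]
  push_cast
  calc ((k : ℝ) + 1) * ∫ R in (0 : ℝ)..1, mollProfile R * R ^ k
      ≤ (k + 1) * ((2 + 4 * exp 3) * ∫ R in (0 : ℝ)..1, mollProfile R * R ^ (k + 1)) := by
        gcongr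
    _ = (2 + 4 * exp 3) * ((k : ℝ) + 2 - 1) *
          ∫ R in (0 : ℝ)..1, mollProfile R * R ^ (k + 1) := by
        ring
end
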